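/- The multistep Shanks transformation is quasilinear: let a, b be real numbers with a ≠ 0 and let T_n = a·S_n + b. Then for every k ≥ 0 and n ≥ 0 with H_k(Δ^{m+1} S_n) ≠ 0, one has H_k(Δ^{m+1} T_n) = a^k·H_k(Δ^{m+1} S_n) ≠ 0 and H_{k+1}(T_n)/H_k(Δ^{m+1} T_n) = a·H_{k+1}(S_n)/H_k(Δ^{m+1} S_n) + b, i.e., e_{k,m}(aS_n + b) = a·e_{k,m}(S_n) + b. -/

import Mathlib

/-!
Write `T = a • S + b`. Since `Δ` kills constants and `m ≥ 1`, every row of the Hankel matrix of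
`T` but the first is `a` times the corresponding row for `S`, while the first row is
`a • S + b • 1`. Multilinearity in the first row gives
`H_{k+1}(T) = a^{k+1} H_{k+1}(S) + b a^k D`, where `D` is the determinant of the matrix of `S`
with its first row replaced by ones. Subtracting each column from the next turns that row into
`(1, 0, …, 0)` and the others into forward differences, so `D = H_k(Δ^{m+1} S)`. The
denominators scale as `H_k(Δ^{m+1} T) = a^k H_k(Δ^{m+1} S)`, and dividing gives the claim.
-/

/-- Forward difference operator: `(fd u) n = u (n+1) - u n`.
Iterated differences are `fd^[i] u`. -/
def fd (u : ℕ → ℝ) : ℕ → ℝ := fun n => u (n + 1) - u n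

/-- Hankel-type determinant `H_k(u_n)` (depending on the fixed integer `m`):
the determinant of the `k × k` matrix whose `(i,j)` entry is `Δ^{i·m} u_{n+j}`.
By convention `H_k = 0` for `k < 0`, and `H_0 = 1` (empty determinant). -/
noncomputable def Hd (m : ℕ) (u : ℕ → ℝ) (k : ℤ) (n : ℕ) : ℝ :=
  if k < 0 then 0
  else Matrix.det (Matrix.of fun i j : Fin k.toNat => fd^[i.val * m] u (n + j.val))

open Matrix

def hankelMatrix (m : ℕ) (u : ℕ → ℝ) (k n : ℕ) : Matrix (Fin k) (Fin k) ℝ :=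
  of fun i j => fd^[i * m] u (n + j)

lemma Hd_natCast (m : ℕ) (u : ℕ → ℝ) (k n : ℕ) : Hd m u k n = (hankelMatrix m u k n).det := by
  simp [Hd, hankelMatrix]

lemma Hd_natCast_add_one (m : ℕ) (u : ℕ → ℝ) (k n : ℕ) :
    Hd m u (k + 1) n = (hankelMatrix m u (k + 1) n).det := by
  exact_mod_cast Hd_natCast m u (k + 1) n

lemma iterate_fd_const_mul (a : ℝ) (u : ℕ → ℝ) (p : ℕ) :
    fd^[p] (fun n => a * u n) = fun n => a * fd^[p] u n := by
  induction p generalizing u with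
  | zero => rfl
  | succ p ih =>
    rw [Function.iterate_succ_apply, Function.iterate_succ_apply, ← ih]
    congr 1
    funext n
    simp only [fd]
    ring

lemma iterate_fd_affine (a b : ℝ) (u : ℕ → ℝ) (p : ℕ) :
    fd^[p + 1] (fun n => a * u n + b) = fun n => a * fd^[p + 1] u n := by
  rw [Function.iterate_succ_apply, Function.iterate_succ_apply, ← iterate_fd_const_mul]
  congr 1
  funext n
  simp only [fd]
  ring

lemma hankelMatrix_const_mul (m : ℕ) (a : ℝ) (u : ℕ → ℝ) (k n : ℕ) :
    hankelMatrix m (fun n => a * u n) k n = a • hankelMatrix m u k n := by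
  ext i j
  simp [hankelMatrix, iterate_fd_const_mul]

lemma det_updateRow_zero_one_eq_det_fd (k n : ℕ) (f : Fin (k + 1) → ℕ → ℝ) :
    (updateRow (of fun i j : Fin (k + 1) => f i (n + j)) 0 1).det =
      (of fun i j : Fin k => fd (f i.succ) (n + j)).det := by
  let B : Matrix (Fin (k + 1)) (Fin (k + 1)) ℝ :=
    Fin.cons (Pi.single 0 1) fun i => Fin.cons (f i.succ n) fun j => fd (f i.succ) (n + j)
  have hB : (updateRow (of fun i j : Fin (k + 1) => f i (n + j)) 0 1).det = B.det := by
    refine det_eq_of_forall_col_eq_smul_add_pred (fun _ => 1) (fun i => ?_) (fun i j => ?_)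
    · cases i using Fin.cases <;> simp [B]
    · cases i using Fin.cases
      · simp [B]
      · simp [B, fd, add_assoc]
  rw [hB, det_succ_row_zero, Fin.sum_univ_succ, Finset.sum_eq_zero (fun j _ => by simp [B])]
  simp [B]
  rfl

lemma det_updateRow_hankelMatrix_zero_one (m : ℕ) (u : ℕ → ℝ) (k n : ℕ) :
    (updateRow (hankelMatrix m u (k + 1) n) 0 1).det =
      (hankelMatrix m (fd^[m + 1] u) k n).det := by
  rw [hankelMatrix, det_updateRow_zero_one_eq_det_fd]
  congr 2
  ext i j
  rw [← Function.iterate_succ_apply' fd, ← Function.iterate_add_apply, Fin.val_succ,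
    show (((i : ℕ) + 1) * m).succ = i * m + (m + 1) by rw [Nat.succ_eq_add_one]; ring]

lemma hankelMatrix_affine {m : ℕ} (hm : 1 ≤ m) (a b : ℝ) (u : ℕ → ℝ) (k n : ℕ) :
    hankelMatrix m (fun n => a * u n + b) (k + 1) n =
      updateRow (a • hankelMatrix m u (k + 1) n) 0 (a • hankelMatrix m u (k + 1) n 0 + b • 1) := by
  ext i j
  cases i using Fin.cases with
  | zero => simp [hankelMatrix]
  | succ i =>
    obtain ⟨p, hp⟩ : ∃ p, ((i : ℕ) + 1) * m = p + 1 :=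
      Nat.exists_eq_add_one.mpr (Nat.mul_pos i.succ_pos hm)
    simp [hankelMatrix, hp, iterate_fd_affine]

lemma det_hankelMatrix_affine {m : ℕ} (hm : 1 ≤ m) (a b : ℝ) (u : ℕ → ℝ) (k n : ℕ) :
    (hankelMatrix m (fun n => a * u n + b) (k + 1) n).det =
      a ^ (k + 1) * (hankelMatrix m u (k + 1) n).det +
        b * a ^ k * (hankelMatrix m (fd^[m + 1] u) k n).det := by
  rw [hankelMatrix_affine hm, det_updateRow_add, det_updateRow_smul, det_updateRow_smul,
    det_updateRow_smul_left, det_updateRow_smul_left, updateRow_eq_self,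
    det_updateRow_hankelMatrix_zero_one, Fintype.card_fin, add_tsub_cancel_right]
  ring

/-- Quasilinearity of the multistep Shanks transformation: let `a ≠ 0`, `b : ℝ` and
`T_n = a·S_n + b`. Then for every `k, n ≥ 0` with `H_k(Δ^{m+1}S_n) ≠ 0`, one has
`H_k(Δ^{m+1}T_n) = a^k · H_k(Δ^{m+1}S_n) ≠ 0` and
`H_{k+1}(T_n)/H_k(Δ^{m+1}T_n) = a · H_{k+1}(S_n)/H_k(Δ^{m+1}S_n) + b`,
i.e. `e_{k,m}(aS_n + b) = a·e_{k,m}(S_n) + b`. -/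
theorem stmt_18 (m : ℕ) (hm : 1 ≤ m) (S : ℕ → ℝ) (a b : ℝ) (ha : a ≠ 0)
    (T : ℕ → ℝ) (hT : ∀ n : ℕ, T n = a * S n + b) :
    ∀ k n : ℕ, Hd m (fd^[m + 1] S) (k : ℤ) n ≠ 0 →
      Hd m (fd^[m + 1] T) (k : ℤ) n = a ^ k * Hd m (fd^[m + 1] S) (k : ℤ) n ∧
      Hd m (fd^[m + 1] T) (k : ℤ) n ≠ 0 ∧
      Hd m T ((k : ℤ) + 1) n / Hd m (fd^[m + 1] T) (k : ℤ) n =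
        a * (Hd m S ((k : ℤ) + 1) n / Hd m (fd^[m + 1] S) (k : ℤ) n) + b := by
  obtain rfl : T = fun n => a * S n + b := funext hT
  intro k n hk
  have hden : Hd m (fd^[m + 1] fun n => a * S n + b) k n = a ^ k * Hd m (fd^[m + 1] S) k n := by
    rw [iterate_fd_affine, Hd_natCast, Hd_natCast, hankelMatrix_const_mul, det_smul,
      Fintype.card_fin]
  refine ⟨hden, hden ▸ mul_ne_zero (pow_ne_zero k ha) hk, ?_⟩
  rw [hden, Hd_natCast_add_one, Hd_natCast_add_one, det_hankelMatrix_affine hm,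
    ← Hd_natCast m (fd^[m + 1] S)]
  field_simp
  ring
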